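/- Let $T$ be a relative Rota-Baxter operator on a Leibniz triple system $(\mathfrak{L},\{\cdot,\cdot,\cdot\})$ with respect to a representation $(r,m,l)$ on $V$. Define $\{u,v,w\}_T := l(Tu,Tv)w + m(Tu,Tw)v + r(Tv,Tw)u$. Then $(V,\{\cdot,\cdot,\cdot\}_T)$ is a Leibniz triple system and $T:(V,\{\cdot,\cdot,\cdot\}_T)\to(\mathfrak{L},\{\cdot,\cdot,\cdot\})$ is a morphism of Leibniz triple systems. -/

import Mathlib

def IsTrilin (K : Type*) [Field K] {L M : Type*} [AddCommGroup L] [Module K L]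
    [AddCommGroup M] [Module K M] (t : L → L → L → M) : Prop :=
  (∀ y z, IsLinearMap K fun x => t x y z) ∧ (∀ x z, IsLinearMap K fun y => t x y z) ∧
    (∀ x y, IsLinearMap K fun z => t x y z)

def LTSIdent {L : Type*} [AddCommGroup L] (t : L → L → L → L) : Prop :=
  (∀ a b c d e, t a b (t c d e) =
      t (t a b c) d e - t (t a b d) c e - t (t a b e) c d + t (t a b e) d c) ∧
  (∀ a b c d e, t a (t b c d) e =
      t (t a b c) d e - t (t a c b) d e - t (t a d b) c e + t (t a d c) b e)

def IsLTS (K : Type*) [Field K] {L : Type*} [AddCommGroup L] [Module K L]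
    (t : L → L → L → L) : Prop := IsTrilin K t ∧ LTSIdent t

def sd {L V : Type*} [AddCommGroup L] [AddCommGroup V]
    (t : L → L → L → L) (l m r : L → L → V → V) :
    L × V → L × V → L × V → L × V :=
  fun p q s => (t p.1 q.1 s.1, l p.1 q.1 s.2 + m p.1 s.1 q.2 + r q.1 s.1 p.2)

def IsRep (K : Type*) [Field K] {L V : Type*} [AddCommGroup L] [Module K L]
    [AddCommGroup V] [Module K V] (t : L → L → L → L) (l m r : L → L → V → V) : Prop :=
  IsLTS K (sd t l m r)

def IsRRB {K : Type*} [Field K] {L V : Type*} [AddCommGroup L] [Module K L]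
    [AddCommGroup V] [Module K V] (t : L → L → L → L) (l m r : L → L → V → V)
    (T : V →ₗ[K] L) : Prop :=
  ∀ u v w, t (T u) (T v) (T w) =
    T (l (T u) (T v) w + m (T u) (T w) v + r (T v) (T w) u)

def IsRB {K : Type*} [Field K] {L : Type*} [AddCommGroup L] [Module K L]
    (t : L → L → L → L) (R : L →ₗ[K] L) : Prop :=
  ∀ x y z, t (R x) (R y) (R z) =
    R (t (R x) (R y) z + t (R x) y (R z) + t x (R y) (R z))

def IsNij {K : Type*} [Field K] {A : Type*} [AddCommGroup A] [Module K A]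
    (t : A → A → A → A) (N : A →ₗ[K] A) : Prop :=
  ∀ x y z, t (N x) (N y) (N z) =
    N (t (N x) (N y) z) + N (t x (N y) (N z)) + N (t (N x) y (N z))
      - N (N (t (N x) y z)) - N (N (t x (N y) z)) - N (N (t x y (N z)))
      + N (N (N (t x y z)))

/-! The graph `u ↦ (T u, u)` of a relative Rota–Baxter operator is an injective linear map
`V → 𝔏 ⊕ V` which, by the Rota–Baxter identity, carries `{·,·,·}_T` to the semidirect product
bracket. As `(r, m, l)` is a representation, the semidirect product is a Leibniz triple system,
and trilinearity and both Leibniz identities pull back along the graph to `V`. -/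

section Pullback

variable {K : Type*} [Field K] {V W : Type*} [AddCommGroup V] [Module K V]
  [AddCommGroup W] [Module K W]

theorem IsLinearMap.of_injective_comp {U : Type*} [AddCommGroup U] [Module K U] {g : U → V}
    (f : V →ₗ[K] W) (hf : Function.Injective f) (hfg : IsLinearMap K (f ∘ g)) : IsLinearMap K g where
  map_add x y := hf <| by simpa using hfg.map_add x y
  map_smul c x := hf <| by simpa using hfg.map_smul c x

variable {s : W → W → W → W} {b : V → V → V → V} (f : V →ₗ[K] W)
  (hf : Function.Injective f) (hfb : ∀ u v w, f (b u v w) = s (f u) (f v) (f w))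
include hf hfb

theorem IsTrilin.of_injective (hs : IsTrilin K s) : IsTrilin K b := by
  obtain ⟨h₁, h₂, h₃⟩ := hs
  refine ⟨fun y z => ?_, fun x z => ?_, fun x y => ?_⟩ <;>
    refine IsLinearMap.of_injective_comp f hf ?_ <;>
    simp only [Function.comp_def, hfb]
  · exact ((h₁ (f y) (f z)).mk' _ ∘ₗ f).isLinear
  · exact ((h₂ (f x) (f z)).mk' _ ∘ₗ f).isLinear
  · exact ((h₃ (f x) (f y)).mk' _ ∘ₗ f).isLinear

theorem LTSIdent.of_injective (hs : LTSIdent s) : LTSIdent b := by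
  refine ⟨fun a b' c d e => hf ?_, fun a b' c d e => hf ?_⟩ <;>
    simp only [map_sub, map_add, hfb]
  · exact hs.1 _ _ _ _ _
  · exact hs.2 _ _ _ _ _

theorem IsLTS.of_injective (hs : IsLTS K s) : IsLTS K b :=
  ⟨hs.1.of_injective f hf hfb, hs.2.of_injective f hf hfb⟩

end Pullback

theorem IsRRB.sd_graph {K : Type*} [Field K] {L V : Type*} [AddCommGroup L] [Module K L]
    [AddCommGroup V] [Module K V] {t : L → L → L → L} {l m r : L → L → V → V}
    {T : V →ₗ[K] L} (hT : IsRRB t l m r T) (u v w : V) :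
    sd t l m r (T u, u) (T v, v) (T w, w) =
      (T (l (T u) (T v) w + m (T u) (T w) v + r (T v) (T w) u),
        l (T u) (T v) w + m (T u) (T w) v + r (T v) (T w) u) :=
  Prod.ext (hT u v w) rfl

theorem stmt8 {K : Type*} [Field K] {L V : Type*} [AddCommGroup L] [Module K L]
    [AddCommGroup V] [Module K V]
    (t : L → L → L → L) (l m r : L → L → V → V)
    (hrep : IsRep K t l m r)
    (T : V →ₗ[K] L) (hT : IsRRB t l m r T) :
    IsLTS K (fun u v w : V => l (T u) (T v) w + m (T u) (T w) v + r (T v) (T w) u) ∧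
      (∀ u v w : V,
        T (l (T u) (T v) w + m (T u) (T w) v + r (T v) (T w) u) =
          t (T u) (T v) (T w)) :=
  ⟨hrep.of_injective (T.prod LinearMap.id) (fun _ _ h => congrArg Prod.snd h)
      fun u v w => (hT.sd_graph u v w).symm,
    fun u v w => (hT u v w).symm⟩
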